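/- arXiv:2605.01984 — 4 statements merged into one kernel-verified Lean document; each statement's English description precedes it below -/
import Mathlib

section
/- Let O be a valuation ring with fraction field K, and let L be an algebraic field extension of K. Then the integral closure of O in L is faithfully flat as an O-module; in particular the induced map of prime spectra Spec(integral closure) → Spec(O) is surjective. -/
/-!
Valuation rings are Bézout domains, over which torsion-free modules are flat; the integral
closure is torsion-free, being a subring of the field `L`. It is also an integral extension
of `O`, so lying over makes `Spec` surjective, and a flat algebra that is surjective on `Spec`
is faithfully flat.
-/

theorem Module.Flat.of_isBezout {R M : Type*} [CommRing R] [IsDomain R] [IsBezout R]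
    [AddCommGroup M] [Module R M] [Module.IsTorsionFree R M] : Module.Flat R M := by
  rw [Module.Flat.flat_iff_torsion_eq_bot_of_isBezout,
    ← Submodule.isTorsionFree_iff_torsion_eq_bot]
  infer_instance

theorem Module.FaithfullyFlat.of_isIntegral_of_isBezout {A B : Type*} [CommRing A] [IsDomain A]
    [IsBezout A] [CommRing B] [Algebra A B] [Algebra.IsIntegral A B] [FaithfulSMul A B]
    [Module.IsTorsionFree A B] : Module.FaithfullyFlat A B :=
  have : Module.Flat A B := .of_isBezout
  .of_comap_surjective (Algebra.IsIntegral.comap_surjective A B)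

theorem statement_1_general (O K L : Type*) [CommRing O] [IsDomain O] [ValuationRing O]
    [Field K] [Algebra O K] [IsFractionRing O K]
    [Field L] [Algebra K L]
    [Algebra O L] [IsScalarTower O K L] :
    Module.FaithfullyFlat O (integralClosure O L) ∧
      Function.Surjective
        (PrimeSpectrum.comap (algebraMap O (integralClosure O L))) := by
  have : FaithfulSMul O L := .trans O K L
  have : Module.FaithfullyFlat O (integralClosure O L) := .of_isIntegral_of_isBezout
  exact ⟨this, PrimeSpectrum.comap_surjective_of_faithfullyFlat⟩

/-- The integral closure of a valuation ring `O` in an algebraic extension `L` of its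
fraction field `K` is faithfully flat as an `O`-module; in particular the induced map
on prime spectra is surjective. -/
theorem statement_1 (O K L : Type*) [CommRing O] [IsDomain O] [ValuationRing O]
    [Field K] [Algebra O K] [IsFractionRing O K]
    [Field L] [Algebra K L] [Algebra.IsAlgebraic K L]
    [Algebra O L] [IsScalarTower O K L] :
    Module.FaithfullyFlat O (integralClosure O L) ∧
      Function.Surjective
        (PrimeSpectrum.comap (algebraMap O (integralClosure O L))) :=
  statement_1_general O K L
end

section
/- Let O be a valuation ring whose Krull dimension is finite and at least 1, with maximal ideal m. Then there exists an element a ∈ m such that the only prime ideal of O containing a is m; equivalently, the vanishing locus of a in Spec(O) is exactly the closed point, i.e., the radical of the principal ideal (a) equals m. -/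
/-!
The primes of a valuation ring form a chain, and finite Krull dimension makes this chain
well-founded, so the maximal ideal `m` has an immediate predecessor `p` among the primes
(which exists since the dimension is positive). Any `a ∈ m \ p` then lies in no prime other
than `m`: a prime containing `a` is not below `p`, hence lies above `p`, hence is `m`.
-/

open IsLocalRing

theorem Order.wellFoundedGT_of_finiteDimensionalOrder {α : Type*} [Preorder α]
    [FiniteDimensionalOrder α] : WellFoundedGT α :=
  ⟨SetRel.IsWellFounded.inv_of_finiteDimensional {(a, b) : α × α | a < b}⟩

theorem IsLocalRing.exists_covBy_top_primeSpectrum {R : Type*} [CommRing R] [IsLocalRing R]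
    [FiniteRingKrullDim R] (h : 1 ≤ ringKrullDim R) : ∃ p : PrimeSpectrum R, p ⋖ ⊤ := by
  have := Order.wellFoundedGT_of_finiteDimensionalOrder (α := PrimeSpectrum R)
  obtain ⟨x, y, hxy⟩ := Order.one_le_krullDim_iff.mp h
  obtain ⟨p, -, hp⟩ := exists_le_covBy_of_lt (hxy.trans_le le_top)
  exact ⟨p, hp⟩

theorem ValuationRing.eq_maximalIdeal_of_covBy_top {O : Type*} [CommRing O] [IsDomain O]
    [ValuationRing O] {p : PrimeSpectrum O} (hp : p ⋖ ⊤) {a : O} (ha : a ∉ p.asIdeal)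
    {q : Ideal O} (hq : q.IsPrime) (haq : a ∈ q) : q = maximalIdeal O := by
  rcases total_of (· ≤ ·) q p.asIdeal with hqp | hpq
  · exact absurd (hqp haq) ha
  · rcases hp.eq_or_eq (show p ≤ ⟨q, hq⟩ from hpq) le_top with h | h
    · exact absurd (h ▸ haq) ha
    · exact congrArg PrimeSpectrum.asIdeal h

theorem IsLocalRing.radical_eq_maximalIdeal_of_forall_isPrime {R : Type*} [CommRing R]
    [IsLocalRing R] {I : Ideal R} (hI : I ≤ maximalIdeal R)
    (h : ∀ p : Ideal R, p.IsPrime → I ≤ p → p = maximalIdeal R) :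
    I.radical = maximalIdeal R := by
  rw [Ideal.radical_eq_sInf]
  exact le_antisymm (sInf_le ⟨hI, inferInstance⟩) (le_sInf fun p hp ↦ (h p hp.2 hp.1).ge)

/-- In a valuation ring of finite Krull dimension at least `1`, with maximal ideal `m`,
there is an element `a ∈ m` whose only prime containing it is `m`; equivalently the
radical of `(a)` is `m`. -/
theorem statement_5 (O : Type*) [CommRing O] [IsDomain O] [ValuationRing O]
    (hfin : ∃ r : ℕ, ringKrullDim O = r) (hpos : 1 ≤ ringKrullDim O) :
    ∃ a ∈ IsLocalRing.maximalIdeal O,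
      (∀ p : Ideal O, p.IsPrime → a ∈ p → p = IsLocalRing.maximalIdeal O) ∧
      (Ideal.span {a}).radical = IsLocalRing.maximalIdeal O := by
  have : FiniteRingKrullDim O := by
    obtain ⟨r, hr⟩ := hfin
    exact finiteRingKrullDim_iff_ne_bot_and_top.mpr
      ⟨hr ▸ WithBot.natCast_ne_bot r,
        hr ▸ fun h ↦ ENat.natCast_ne_top r (WithBot.coe_injective h)⟩
  obtain ⟨p, hp⟩ := exists_covBy_top_primeSpectrum hpos
  obtain ⟨a, ham, hap⟩ :=
    SetLike.exists_of_lt ((PrimeSpectrum.asIdeal_lt_asIdeal _ _).mpr hp.lt)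
  have hprimes (q : Ideal O) (hq : q.IsPrime) (haq : a ∈ q) : q = maximalIdeal O :=
    ValuationRing.eq_maximalIdeal_of_covBy_top hp hap hq haq
  refine ⟨a, ham, hprimes, radical_eq_maximalIdeal_of_forall_isPrime ?_ fun q hq hsq ↦ ?_⟩
  · exact (Ideal.span_singleton_le_iff_mem _).mpr ham
  · exact hprimes q hq ((Ideal.span_singleton_le_iff_mem _).mp hsq)
end

section
/- Let A be a commutative ring whose prime spectrum Spec(A) is a noetherian topological space. Then every closed subset Z of Spec(A) is the zero locus of a finitely generated ideal of A; in particular, Z admits the structure of a finitely presented closed subscheme. -/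
/-- If `Spec A` is a noetherian topological space, then every closed subset of `Spec A` is
the zero locus of a finitely generated ideal of `A`. -/
theorem statement_8 (A : Type*) [CommRing A]
    [TopologicalSpace.NoetherianSpace (PrimeSpectrum A)]
    (Z : Set (PrimeSpectrum A)) (hZ : IsClosed Z) :
    ∃ I : Ideal A, I.FG ∧ Z = PrimeSpectrum.zeroLocus (I : Set A) := by
  obtain ⟨I, hfg, hI⟩ := PrimeSpectrum.isCompact_isOpen_iff_ideal.mp
    ⟨TopologicalSpace.NoetherianSpace.isCompact Zᶜ, hZ.isOpen_compl⟩
  exact ⟨I, hfg, by rw [← compl_compl Z, ← hI, compl_compl]⟩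
end

section
/- Let O be a valuation ring of finite Krull dimension and let A be a finite type O-algebra. Then the prime spectrum Spec(A) is a noetherian topological space. -/
/-!
The prime ideals of a valuation ring form a chain, so finite Krull dimension forces `Spec O` to
be finite. The fibre of `Spec A → Spec O` over `p` is homeomorphic to `Spec (κ(p) ⊗[O] A)`, a
finite type algebra over a field and hence a noetherian ring; a finite union of noetherian
subspaces is noetherian.
-/

open Order TopologicalSpace

theorem Order.finite_of_krullDim_ne_top {α : Type*} [LinearOrder α] (h : krullDim α ≠ ⊤) :
    Finite α := by
  contrapose! h
  refine ENat.WithBot.eq_top_iff_forall_ge.mpr fun n => le_krullDim_iff.mpr ?_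
  obtain ⟨s, hs⟩ := Infinite.exists_subset_card_eq α (n + 1)
  exact ⟨LTSeries.mk n (s.orderEmbOfFin hs) (s.orderEmbOfFin hs).strictMono, rfl⟩

theorem ValuationRing.finite_primeSpectrum (O : Type*) [CommRing O] [IsDomain O]
    [ValuationRing O] (h : ringKrullDim O ≠ ⊤) : Finite (PrimeSpectrum O) :=
  letI : LinearOrder (PrimeSpectrum O) :=
    { le_total := fun p q => (ValuationRing.le_total_ideal O).total p.asIdeal q.asIdeal
      toDecidableLE := Classical.decRel _ }
  finite_of_krullDim_ne_top h

namespace PrimeSpectrum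

variable (R A : Type*) [CommRing R] [CommRing A] [Algebra R A] [Algebra.FiniteType R A]

theorem noetherianSpace_preimage_comap_singleton (p : PrimeSpectrum R) :
    NoetherianSpace (comap (algebraMap R A) ⁻¹' {p}) :=
  have : IsNoetherianRing (p.asIdeal.Fiber A) :=
    Algebra.FiniteType.isNoetherianRing p.asIdeal.ResidueField _
  (noetherianSpace_iff_of_homeomorph (preimageHomeomorphFiber R A p)).mpr inferInstance

theorem noetherianSpace_of_finite_primeSpectrum [Finite (PrimeSpectrum R)] :
    NoetherianSpace (PrimeSpectrum A) := by
  have := NoetherianSpace.iUnion (hf := noetherianSpace_preimage_comap_singleton R A)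
    fun p => comap (algebraMap R A) ⁻¹' {p}
  rwa [← Set.preimage_iUnion, Set.iUnion_of_singleton, Set.preimage_univ,
    noetherian_univ_iff] at this

end PrimeSpectrum

/-- For a valuation ring `O` of finite Krull dimension and a finite type `O`-algebra `A`,
the prime spectrum of `A` is a noetherian topological space. -/
theorem statement_9 (O A : Type*) [CommRing O] [IsDomain O] [ValuationRing O]
    (hdim : ∃ r : ℕ, ringKrullDim O = r)
    [CommRing A] [Algebra O A] [Algebra.FiniteType O A] :
    TopologicalSpace.NoetherianSpace (PrimeSpectrum A) := by
  obtain ⟨r, hr⟩ := hdim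
  have : Finite (PrimeSpectrum O) :=
    ValuationRing.finite_primeSpectrum O (hr ▸ nofun)
  exact PrimeSpectrum.noetherianSpace_of_finite_primeSpectrum O A
end
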